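/- For odd n > 3, there exists a surjective group homomorphism from the group ⟨a, b | R₇, R₈⟩ onto the dihedral group of order 2(2n-7), sending a ↦ x, b ↦ y, where R₇: a(b⁻¹a)^{(n-3)/2} a b a⁻¹ (a⁻¹b)^{(n-3)/2} = (ba⁻¹)^{(n-5)/2} b⁻¹ a b (ab⁻¹)^{(n-5)/2} a and R₈: (b⁻¹a)^{(n-5)/2} b⁻¹ a b (a⁻¹b)^{(n-5)/2} a = b(b⁻¹a)^{(n-5)/2} b⁻¹ a b (a⁻¹b)^{(n-5)/2}; in particular this group is not isomorphic to ℤ. -/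

import Mathlib

/-- The free group on two generators. -/
abbrev F : Type := FreeGroup (Fin 2)

/-- The generator `a`. -/
def a : F := FreeGroup.of 0

/-- The generator `b`. -/
def b : F := FreeGroup.of 1

/-- The relators `R₇` and `R₈` of the group `G(T_{n,2})` of the welded twist knot with two
welded crossings separated by one classical crossing (for odd `n`):
`R₇ : a(b⁻¹a)^{(n-3)/2} a b a⁻¹ (a⁻¹b)^{(n-3)/2} = (ba⁻¹)^{(n-5)/2} b⁻¹ a b (ab⁻¹)^{(n-5)/2} a`,
`R₈ : (b⁻¹a)^{(n-5)/2} b⁻¹ a b (a⁻¹b)^{(n-5)/2} a = b(b⁻¹a)^{(n-5)/2} b⁻¹ a b (a⁻¹b)^{(n-5)/2}`. -/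
def rels (n : ℕ) : Set F :=
  {a * (b⁻¹ * a) ^ ((n - 3) / 2) * a * b * a⁻¹ * (a⁻¹ * b) ^ ((n - 3) / 2) *
     ((b * a⁻¹) ^ ((n - 5) / 2) * b⁻¹ * a * b * (a * b⁻¹) ^ ((n - 5) / 2) * a)⁻¹,
   (b⁻¹ * a) ^ ((n - 5) / 2) * b⁻¹ * a * b * (a⁻¹ * b) ^ ((n - 5) / 2) * a *
     (b * (b⁻¹ * a) ^ ((n - 5) / 2) * b⁻¹ * a * b * (a⁻¹ * b) ^ ((n - 5) / 2))⁻¹}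

/-- The quotient map from the free group to the presented group. -/
def π (n : ℕ) : F →* PresentedGroup (rels n) :=
  QuotientGroup.mk' (Subgroup.normalClosure (rels n))

/-!
Send `a` and `b` to the reflections `s` and `r^{n-3} s` of `D_{2n-7}`. Writing `n = 2k + 5`, both
relators evaluate to a rotation by a multiple of `4k + 3 = 2n - 7`, so they die, for any choice of
the second reflection in fact. The map is onto because `(ba)^2 = r^{2(n-3)} = r`, as
`2(n - 3) ≡ 1 mod 2n - 7`; and since `D_{2n-7}` is not cyclic, neither is the presented group.
-/

open DihedralGroup

namespace DihedralGroup

variable {m : ℕ}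

theorem surjective_of_mem_range {G : Type*} [Group G] (f : G →* DihedralGroup m)
    (hr : r 1 ∈ f.range) (hs : sr 0 ∈ f.range) : Function.Surjective f := by
  have hr' (j : ZMod m) : r j ∈ f.range := by
    simpa [r_one_zpow, ZMod.intCast_zmod_cast] using f.range.zpow_mem hr (ZMod.cast j : ℤ)
  rintro (j | j)
  · exact hr' j
  · simpa [sr_mul_r] using f.range.mul_mem hs (hr' j)

end DihedralGroup

theorem ZMod.four_mul_add_three_eq_zero (k : ℕ) : (4 * k + 3 : ZMod (4 * k + 3)) = 0 := by
  exact_mod_cast ZMod.natCast_self (4 * k + 3)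

def toDihedral {m : ℕ} (c : ZMod m) : F →* DihedralGroup m :=
  FreeGroup.lift ![sr 0, sr c]

@[simp]
theorem toDihedral_a {m : ℕ} (c : ZMod m) : toDihedral c a = sr 0 := by
  simp [toDihedral, a]

@[simp]
theorem toDihedral_b {m : ℕ} (c : ZMod m) : toDihedral c b = sr c := by
  simp [toDihedral, b]

theorem toDihedral_rels (k : ℕ) (c : ZMod (4 * k + 3)) :
    ∀ w ∈ rels (2 * k + 5), toDihedral c w = 1 := by
  have hm := ZMod.four_mul_add_three_eq_zero k
  have h₃ : (2 * k + 5 - 3) / 2 = k + 1 := by omega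
  have h₅ : (2 * k + 5 - 5) / 2 = k := by omega
  rintro w (rfl | rfl) <;>
  simp only [h₃, h₅, map_mul, map_inv, map_pow, toDihedral_a, toDihedral_b, inv_sr, inv_r,
      mul_inv_rev, r_mul_r, r_mul_sr, sr_mul_r, sr_mul_sr, r_pow, one_def, r.injEq, Nat.cast_succ]
  · linear_combination c * hm
  · linear_combination -c * hm

theorem not_nonempty_mulEquiv_int_of_surjective {G H : Type*} [Group G] [Group H]
    {f : G →* H} (hf : Function.Surjective f) (hH : ¬ IsCyclic H) :
    ¬ Nonempty (G ≃* Multiplicative ℤ) := fun ⟨e⟩ =>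
  hH (have := isCyclic_of_surjective e.symm e.symm.surjective; isCyclic_of_surjective f hf)

/-- For odd `n > 3`, there is a surjective group homomorphism from `⟨a, b | R₇, R₈⟩` onto
the dihedral group of order `2(2n-7)`, sending `a ↦ x = s` and `b ↦ y = r^{n-3} s`;
in particular this group is not isomorphic to `ℤ`. -/
theorem welded_twist_two_welds_surj_dihedral (n : ℕ) (hn : Odd n) (h3 : 3 < n) :
    (∃ φ : PresentedGroup (rels n) →* DihedralGroup (2 * n - 7),
        Function.Surjective φ ∧
        φ (π n a) = DihedralGroup.sr 0 ∧
        φ (π n b) = DihedralGroup.r 1 ^ (n - 3) * DihedralGroup.sr 0) ∧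
    ¬ Nonempty (PresentedGroup (rels n) ≃* Multiplicative ℤ) := by
  obtain ⟨k, rfl⟩ : ∃ k, n = 2 * k + 5 := by
    obtain ⟨j, rfl⟩ := hn
    exact ⟨j - 2, by omega⟩
  rw [show 2 * (2 * k + 5) - 7 = 4 * k + 3 by omega, show 2 * k + 5 - 3 = 2 * k + 2 by omega]
  set φ := PresentedGroup.toGroup (toDihedral_rels k (-(2 * k + 2) : ZMod (4 * k + 3)))
  have hφ (w : F) : φ (π _ w) = toDihedral (-(2 * k + 2) : ZMod (4 * k + 3)) w := rfl
  have ha : φ (π _ a) = sr 0 := by simp [hφ]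
  have hb : φ (π _ b) = r 1 ^ (2 * k + 2) * sr 0 := by simp [hφ, r_mul_sr]
  have hba : φ (π _ ((b * a) ^ 2)) = r 1 := by
    simp only [map_pow, map_mul, hφ, toDihedral_a, toDihedral_b, sr_mul_sr, r_pow, r.injEq]
    linear_combination ZMod.four_mul_add_three_eq_zero k
  have hsurj := surjective_of_mem_range φ ⟨_, hba⟩ ⟨_, ha⟩
  exact ⟨⟨φ, hsurj, ha, hb⟩,
    not_nonempty_mulEquiv_int_of_surjective hsurj (not_isCyclic (by omega))⟩
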